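/- No-prior-worries: let q be a real number with 0 ≤ q ≤ 1. Then for every prior p with 0 < p < 1, the first-step increasing belief criterion f(q, p) ≥ p holds if and only if q ≥ 1/2. In particular, whether a rule passes the increasing belief criterion at the first step does not depend on the choice of prior p in the open interval (0, 1): for any two priors p₁, p₂ ∈ (0, 1), f(q, p₁) ≥ p₁ ↔ f(q, p₂) ≥ p₂. -/
import Mathlib

/-- The Bayesian belief update `f(q, β) = q·β / (q·β + (1−q)·(1−β))`. -/
noncomputable def bayesUpdate (q β : ℝ) : ℝ :=
  q * β / (q * β + (1 - q) * (1 - β))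

/-- No-prior-worries: for `0 ≤ q ≤ 1`, the first-step increasing belief
criterion `f(q, p) ≥ p` holds for a prior `p ∈ (0,1)` iff `q ≥ 1/2`; in
particular it does not depend on the choice of prior in `(0,1)`. -/
theorem no_prior_worries (q : ℝ) (hq0 : 0 ≤ q) (hq1 : q ≤ 1) :
    (∀ p : ℝ, 0 < p → p < 1 → (bayesUpdate q p ≥ p ↔ q ≥ 1 / 2)) ∧
    (∀ p₁ p₂ : ℝ, 0 < p₁ → p₁ < 1 → 0 < p₂ → p₂ < 1 →
      (bayesUpdate q p₁ ≥ p₁ ↔ bayesUpdate q p₂ ≥ p₂)) := by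
  have key : ∀ p : ℝ, 0 < p → p < 1 → (bayesUpdate q p ≥ p ↔ q ≥ 1 / 2) := by
    intro p hp hp1
    have hpp : 0 < p * (1 - p) := mul_pos hp (by linarith)
    have hD : 0 < q * p + (1 - q) * (1 - p) := by
      rcases eq_or_lt_of_le hq0 with h | h
      · nlinarith
      · nlinarith [mul_pos h hp, mul_nonneg (by linarith : (0:ℝ) ≤ 1 - q) (by linarith : (0:ℝ) ≤ 1 - p)]
    unfold bayesUpdate
    rw [ge_iff_le, le_div_iff₀ hD]
    constructor
    · intro h
      by_contra hc
      push_neg at hc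
      nlinarith [mul_pos hpp (by linarith : (0:ℝ) < 1 - 2 * q)]
    · intro h
      nlinarith [mul_nonneg hpp.le (by linarith : (0:ℝ) ≤ 2 * q - 1)]
  exact ⟨key, fun p₁ p₂ h1 h2 h3 h4 => (key p₁ h1 h2).trans (key p₂ h3 h4).symm⟩
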